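/- Let A ∈ ℝ and let y₁, y₂, x₁, x₂ : ℝ → ℝ be differentiable functions satisfying y₁' = x₁, y₂' = x₂, x₁' = −A y₁ − 2 y₁ y₂, x₂' = −16A y₂ − y₁² − 16 y₂². Then the functions z₁ = y₁², z₂ = y₂, z₃ = x₂, z₄ = y₁x₁, z₅ = 3x₁² + 2y₁²y₂ satisfy the system (8): z₁' = 2z₄, z₂' = z₃, z₃' = −z₁ − 16A z₂ − 16 z₂², z₄' = −A z₁ + (1/3) z₅ − (8/3) z₁ z₂, z₅' = −6A z₄ + 2 z₁ z₃ − 8 z₂ z₄. -/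

import Mathlib

theorem phi_maps_henonHeiles_to_system8 (A : ℝ) (y₁ y₂ x₁ x₂ : ℝ → ℝ)
    (hy₁ : Differentiable ℝ y₁) (hy₂ : Differentiable ℝ y₂)
    (hx₁ : Differentiable ℝ x₁)
    (h₁ : ∀ t, deriv y₁ t = x₁ t)
    (h₂ : ∀ t, deriv y₂ t = x₂ t)
    (h₃ : ∀ t, deriv x₁ t = -A * y₁ t - 2 * y₁ t * y₂ t)
    (h₄ : ∀ t, deriv x₂ t = -(16 * A) * y₂ t - (y₁ t)^2 - 16 * (y₂ t)^2) :
    (∀ t, deriv (fun s => (y₁ s)^2) t = 2 * (y₁ t * x₁ t)) ∧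
    (∀ t, deriv (fun s => y₂ s) t = x₂ t) ∧
    (∀ t, deriv (fun s => x₂ s) t = -((y₁ t)^2) - 16 * A * (y₂ t) - 16 * (y₂ t)^2) ∧
    (∀ t, deriv (fun s => y₁ s * x₁ s) t =
      -A * (y₁ t)^2 + (1/3) * (3 * (x₁ t)^2 + 2 * (y₁ t)^2 * y₂ t)
        - (8/3) * (y₁ t)^2 * y₂ t) ∧
    (∀ t, deriv (fun s => 3 * (x₁ s)^2 + 2 * (y₁ s)^2 * y₂ s) t =
      -(6 * A) * (y₁ t * x₁ t) + 2 * (y₁ t)^2 * x₂ t - 8 * y₂ t * (y₁ t * x₁ t)) := by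
  have dy₁ (t : ℝ) : HasDerivAt y₁ (x₁ t) t := h₁ t ▸ (hy₁ t).hasDerivAt
  have dy₂ (t : ℝ) : HasDerivAt y₂ (x₂ t) t := h₂ t ▸ (hy₂ t).hasDerivAt
  have dx₁ (t : ℝ) : HasDerivAt x₁ (-A * y₁ t - 2 * y₁ t * y₂ t) t := h₃ t ▸ (hx₁ t).hasDerivAt
  refine ⟨fun t => ?_, h₂, fun t => ?_, fun t => ?_, fun t => ?_⟩
  · exact ((dy₁ t).fun_pow 2).deriv.trans (by ring)
  · exact (h₄ t).trans (by ring)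
  · exact ((dy₁ t).fun_mul (dx₁ t)).deriv.trans (by ring)
  · exact ((((dx₁ t).fun_pow 2).const_mul 3).add
      ((((dy₁ t).fun_pow 2).const_mul 2).fun_mul (dy₂ t))).deriv.trans (by ring)
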